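/- Let ℓ ≥ 2 be an integer and let G be the ℓ×ℓ grid graph. Let E* be a set of vertical edges of G, each lying in a column j with 1 < j < ℓ, such that whenever the vertical edge joining (i,j) and (i+1,j) belongs to E*, the vertical edge joining (i,j+1) and (i+1,j+1) does not belong to E*. Let G' be the graph obtained from G by deleting the edges of E*. Let P₁,…,P_k be paths in G, where P_m connects s_m to t_m, such that for every two distinct paths P_m, P_{m'}, every vertex of P_m is at graph distance at least 2 in G from every vertex of P_{m'}, and every path is internally disjoint from the boundary of G. Then there exist pairwise vertex-disjoint paths P'₁,…,P'_k in G' such that P'_m connects s_m to t_m for every 1 ≤ m ≤ k. -/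

import Mathlib

/-- The `ℓ × ℓ` grid graph: vertices `(i,j)` with `0 ≤ i,j < ℓ` (0-indexed), and an edge
between `(i,j)` and `(i',j')` iff `|i-i'| + |j-j'| = 1`. -/
def gridGraph (ℓ : ℕ) : SimpleGraph (Fin ℓ × Fin ℓ) where
  Adj a b := ((a.1 : ℤ) - (b.1 : ℤ)).natAbs + ((a.2 : ℤ) - (b.2 : ℤ)).natAbs = 1
  symm := ⟨by intro a b h; omega⟩
  loopless := ⟨by intro a h; simp at h⟩

/-- The vertical edge of the `ℓ × ℓ` grid joining `(i,j)` and `(i+1,j)` (0-indexed). -/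
def vEdge (ℓ i j : ℕ) (hi : i + 1 < ℓ) (hj : j < ℓ) : Sym2 (Fin ℓ × Fin ℓ) :=
  s((⟨i, by omega⟩, ⟨j, hj⟩), (⟨i + 1, hi⟩, ⟨j, hj⟩))

/-- A vertex of the `ℓ × ℓ` grid lies on the boundary iff one of its coordinates is `0`
or `ℓ - 1`. -/
def onGridBoundary (ℓ : ℕ) (v : Fin ℓ × Fin ℓ) : Prop :=
  (v.1 : ℕ) = 0 ∨ (v.1 : ℕ) = ℓ - 1 ∨ (v.2 : ℕ) = 0 ∨ (v.2 : ℕ) = ℓ - 1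

/-!
Replace every deleted edge `(i,j)–(i+1,j)` by the detour `(i,j) → (i,j+1) → (i+1,j+1) → (i+1,j)`
through the next column: the middle edge survives because deleted edges never sit side by
side, and the two horizontal edges survive because every deleted edge is vertical. Each
rerouted walk then only visits vertices of the original path and their right neighbours.
Two such vertices coming from different paths would be the same or right neighbours of the
same or of adjacent original vertices, contradicting the distance-`2` spacing; shortening the
rerouted walks to paths keeps them disjoint.
-/

open SimpleGraph

variable {ℓ : ℕ}

def IsRightOf (x u : Fin ℓ × Fin ℓ) : Prop :=
  x.1 = u.1 ∧ (x.2 : ℕ) = u.2 + 1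

lemma IsRightOf.adj {x u : Fin ℓ × Fin ℓ} (h : IsRightOf x u) : (gridGraph ℓ).Adj x u := by
  obtain ⟨h1, h2⟩ := h
  show _ + _ = 1
  rw [h1]
  omega

lemma IsRightOf.left_unique {x u v : Fin ℓ × Fin ℓ} (hu : IsRightOf x u) (hv : IsRightOf x v) :
    u = v := by
  obtain ⟨hu1, hu2⟩ := hu
  obtain ⟨hv1, hv2⟩ := hv
  ext
  · rw [← hu1, hv1]
  · omega

lemma gridGraph_dist_le_one_of_eq_or_isRightOf {x u v : Fin ℓ × Fin ℓ}
    (hu : x = u ∨ IsRightOf x u) (hv : x = v ∨ IsRightOf x v) : (gridGraph ℓ).dist u v ≤ 1 := by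
  rcases hu with rfl | hu <;> rcases hv with rfl | hv
  · simp
  · exact (dist_eq_one_iff_adj.mpr hv.adj).le
  · exact (dist_eq_one_iff_adj.mpr hu.adj.symm).le
  · simp [hu.left_unique hv]

def VerticalEdgesBeforeLastColumn (ℓ : ℕ) (E : Set (Sym2 (Fin ℓ × Fin ℓ))) : Prop :=
  ∀ e ∈ E, ∃ (i j : ℕ) (hi : i + 1 < ℓ) (hj : j + 1 < ℓ), e = vEdge ℓ i j hi (Nat.lt_of_succ_lt hj)

def NoSideBySide (ℓ : ℕ) (E : Set (Sym2 (Fin ℓ × Fin ℓ))) : Prop :=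
  ∀ (i j : ℕ) (hi : i + 1 < ℓ) (hj : j + 1 < ℓ),
    vEdge ℓ i j hi (Nat.lt_of_succ_lt hj) ∈ E → vEdge ℓ i (j + 1) hi hj ∉ E

section DeletedEdges

variable {Estar : Set (Sym2 (Fin ℓ × Fin ℓ))}

lemma VerticalEdgesBeforeLastColumn.snd_eq (hvert : VerticalEdgesBeforeLastColumn ℓ Estar)
    {a b : Fin ℓ × Fin ℓ} (h : s(a, b) ∈ Estar) : a.2 = b.2 := by
  obtain ⟨i, j, hi, hj, he⟩ := hvert _ h
  rw [vEdge, Sym2.eq_iff] at he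
  rcases he with ⟨rfl, rfl⟩ | ⟨rfl, rfl⟩ <;> rfl

lemma IsRightOf.deleteEdges_adj (hvert : VerticalEdgesBeforeLastColumn ℓ Estar)
    {x u : Fin ℓ × Fin ℓ} (h : IsRightOf x u) : ((gridGraph ℓ).deleteEdges Estar).Adj u x := by
  refine SimpleGraph.deleteEdges_adj.mpr ⟨h.adj.symm, fun hmem => ?_⟩
  have := congrArg Fin.val (hvert.snd_eq hmem)
  have := h.2
  omega

lemma exists_rightDetour (hvert : VerticalEdgesBeforeLastColumn ℓ Estar)
    (halt : NoSideBySide ℓ Estar)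
    {u v : Fin ℓ × Fin ℓ} (he : s(u, v) ∈ Estar) :
    ∃ u' v', IsRightOf u' u ∧ IsRightOf v' v ∧
      ((gridGraph ℓ).deleteEdges Estar).Adj u' v' := by
  obtain ⟨i, j, hi, hj, hij⟩ := hvert _ he
  have hnext : ((gridGraph ℓ).deleteEdges Estar).Adj
      (⟨i, by omega⟩, ⟨j + 1, hj⟩) (⟨i + 1, hi⟩, ⟨j + 1, hj⟩) := by
    refine deleteEdges_adj.mpr ⟨?_, halt i j hi hj (hij ▸ he)⟩
    show _ + _ = 1
    simp
  rw [vEdge, Sym2.eq_iff] at hij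
  rcases hij with ⟨rfl, rfl⟩ | ⟨rfl, rfl⟩
  · exact ⟨(⟨i, by omega⟩, ⟨j + 1, hj⟩), (⟨i + 1, hi⟩, ⟨j + 1, hj⟩), ⟨rfl, rfl⟩, ⟨rfl, rfl⟩,
      hnext⟩
  · exact ⟨(⟨i + 1, hi⟩, ⟨j + 1, hj⟩), (⟨i, by omega⟩, ⟨j + 1, hj⟩), ⟨rfl, rfl⟩, ⟨rfl, rfl⟩,
      hnext.symm⟩

lemma exists_walk_deleteEdges_of_walk (hvert : VerticalEdgesBeforeLastColumn ℓ Estar)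
    (halt : NoSideBySide ℓ Estar)
    {a b : Fin ℓ × Fin ℓ} (w : (gridGraph ℓ).Walk a b) :
    ∃ w' : ((gridGraph ℓ).deleteEdges Estar).Walk a b,
      ∀ x ∈ w'.support, ∃ u ∈ w.support, x = u ∨ IsRightOf x u := by
  induction w with
  | nil => exact ⟨.nil, by simp⟩
  | @cons u v b h w ih =>
    obtain ⟨w', hw'⟩ := ih
    have hw'' : ∀ x ∈ w'.support, ∃ y ∈ (Walk.cons h w).support, x = y ∨ IsRightOf x y :=
      fun x hx => (hw' x hx).imp fun y ⟨hy, hxy⟩ => ⟨List.mem_cons_of_mem _ hy, hxy⟩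
    have hu : u ∈ (Walk.cons h w).support := List.mem_cons_self ..
    have hv : v ∈ (Walk.cons h w).support := List.mem_cons_of_mem _ w.start_mem_support
    by_cases he : s(u, v) ∈ Estar
    · obtain ⟨u', v', hu', hv', hadj⟩ := exists_rightDetour hvert halt he
      refine ⟨.cons (hu'.deleteEdges_adj hvert) (.cons hadj
        (.cons (hv'.deleteEdges_adj hvert).symm w')), ?_⟩
      intro x hx
      simp only [Walk.support_cons, List.mem_cons] at hx
      rcases hx with rfl | rfl | rfl | hx
      exacts [⟨x, hu, .inl rfl⟩, ⟨u, hu, .inr hu'⟩, ⟨v, hv, .inr hv'⟩, hw'' x hx]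
    · refine ⟨.cons (deleteEdges_adj.mpr ⟨h, he⟩) w', ?_⟩
      intro x hx
      rcases List.mem_cons.mp hx with rfl | hx
      exacts [⟨x, hu, .inl rfl⟩, hw'' x hx]

end DeletedEdges

/-- Let `ℓ ≥ 2` and let `E*` be a set of vertical edges of the `ℓ × ℓ`
grid, each lying in a column `j` that is neither the first nor the last, such that whenever
the vertical edge joining `(i,j)` and `(i+1,j)` is in `E*`, the vertical edge joining
`(i,j+1)` and `(i+1,j+1)` is not. If `P₁,…,P_k` are paths in the grid, pairwise at graph
distance at least `2` from one another, and internally disjoint from the grid boundary,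
then there are pairwise vertex-disjoint paths in the grid minus `E*` with the same
endpoints. -/
theorem stmt_13 (ℓ : ℕ) (Estar : Set (Sym2 (Fin ℓ × Fin ℓ)))
    (hvert : ∀ e ∈ Estar, ∃ (i j : ℕ) (hi : i + 1 < ℓ) (hj0 : 0 < j) (hj : j + 1 < ℓ),
        e = vEdge ℓ i j hi (by omega))
    (halt : ∀ (i j : ℕ) (hi : i + 1 < ℓ) (hj : j + 1 < ℓ),
        vEdge ℓ i j hi (by omega) ∈ Estar → vEdge ℓ i (j + 1) hi hj ∉ Estar)
    (k : ℕ) (s t : Fin k → Fin ℓ × Fin ℓ)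
    (p : ∀ m, (gridGraph ℓ).Walk (s m) (t m))
    (hspaced : ∀ m m', m ≠ m' → ∀ u ∈ (p m).support, ∀ v ∈ (p m').support,
        2 ≤ (gridGraph ℓ).dist u v) :
    ∃ p' : ∀ m, ((gridGraph ℓ).deleteEdges Estar).Walk (s m) (t m),
      (∀ m, (p' m).IsPath) ∧
      (∀ m m', m ≠ m' → ∀ v ∈ (p' m).support, v ∉ (p' m').support) := by
  have hvert' : VerticalEdgesBeforeLastColumn ℓ Estar := fun e he =>
    let ⟨i, j, hi, _, hj, h⟩ := hvert e he; ⟨i, j, hi, hj, h⟩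
  choose w hw using fun m => exists_walk_deleteEdges_of_walk hvert' halt (p m)
  refine ⟨fun m => (w m).bypass, fun m => (w m).bypass_isPath, ?_⟩
  intro m m' hmm' x hx hx'
  obtain ⟨u, hu, hxu⟩ := hw m x ((w m).support_bypass_subset_support hx)
  obtain ⟨u', hu', hxu'⟩ := hw m' x ((w m').support_bypass_subset_support hx')
  have hfar := hspaced m m' hmm' u hu u' hu'
  have hnear := gridGraph_dist_le_one_of_eq_or_isRightOf hxu hxu'
  omega
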